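/- arXiv:1905.08311 — 2 statements merged into one kernel-verified Lean document; each statement's English description precedes it below -/
import Mathlib

section
/- Let N, y be natural numbers and let U, D, U', D' be subsets of [N] = {1,...,N} such that |U| = |U'|, |D| = |D'|, U ∪ D = U' ∪ D', U ∩ D = U' ∩ D', and y ≤ N − |U ∪ D|. Then (∑_{S ⊆ [N]∖(U∪D), |S| = y} Δ(U∪S)·Δ(D∪S)) · Δ(U')·Δ(D') = (∑_{S ⊆ [N]∖(U∪D), |S| = y} Δ(U'∪S)·Δ(D'∪S)) · Δ(U)·Δ(D), where the sums range over all y-element subsets S of [N]∖(U∪D). (This is the Shuffling Theorem for lozenge tilings of doubly-dented hexagons, expressed through the identity that the number of lozenge tilings of the doubly-dented hexagon H_{x,y}(U;D) with N = x+y+n equals ∑_{|S|=y} Δ(U∪S)Δ(D∪S)/(Δ([|U|+y])Δ([|D|+y])): shuffling the positions of the removed up-pointing and down-pointing unit triangles changes the tiling number only by the factor ∏_{i<j}(s_j−s_i)/(s'_j−s'_i) · ∏_{i<j}(t_j−t_i)/(t'_j−t'_i).) -/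
open Finset

/-- Vandermonde product `Δ(T) = ∏_{i<j in T} (t_j - t_i)` of a finite set of naturals. -/
def vdm (T : Finset ℕ) : ℤ :=
  ∏ p ∈ (T ×ˢ T).filter (fun p => p.1 < p.2), ((p.2 : ℤ) - (p.1 : ℤ))

private def gfun (p : ℕ × ℕ) : ℤ := if p.1 < p.2 then (p.2 : ℤ) - p.1 else 1

private def cross (A S : Finset ℕ) : ℤ :=
  ∏ a ∈ A, ∏ s ∈ S, (if a < s then (s : ℤ) - a else (a : ℤ) - s)

private lemma vdm_eq (T : Finset ℕ) : vdm T = ∏ x ∈ T, ∏ y ∈ T, gfun (x, y) := by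
  rw [vdm, Finset.prod_filter, Finset.prod_product]
  rfl

private lemma vdm_union (A S : Finset ℕ) (h : Disjoint A S) :
    vdm (A ∪ S) = vdm A * vdm S * cross A S := by
  have key : ∀ a ∈ A, ∀ s ∈ S,
      gfun (a, s) * gfun (s, a) = (if a < s then (s : ℤ) - a else (a : ℤ) - s) := by
    intro a ha s hs
    have hne : a ≠ s := fun hEq => (Finset.disjoint_left.mp h ha) (hEq ▸ hs)
    rcases lt_trichotomy a s with hlt | hEq | hgt
    · simp [gfun, hlt, not_lt.mpr hlt.le]
    · exact absurd hEq hne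
    · simp [gfun, hgt, not_lt.mpr hgt.le]
  rw [vdm_eq, vdm_eq A, vdm_eq S]
  rw [Finset.prod_union h]
  have h1 : ∀ x : ℕ, ∏ y ∈ A ∪ S, gfun (x, y)
      = (∏ y ∈ A, gfun (x, y)) * ∏ y ∈ S, gfun (x, y) := by
    intro x; rw [Finset.prod_union h]
  simp only [h1]
  rw [Finset.prod_mul_distrib, Finset.prod_mul_distrib]
  have h2 : (∏ x ∈ A, ∏ y ∈ S, gfun (x, y)) * ∏ x ∈ S, ∏ y ∈ A, gfun (x, y)
      = cross A S := by
    rw [Finset.prod_comm (s := S) (t := A) (f := fun x y => gfun (x, y)),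
      ← Finset.prod_mul_distrib]
    unfold cross
    refine Finset.prod_congr rfl fun a ha => ?_
    rw [← Finset.prod_mul_distrib]
    exact Finset.prod_congr rfl fun s hs => key a ha s hs
  rw [← h2]; ring

private lemma pair_eq (U D S : Finset ℕ) (hUS : Disjoint U S) (hDS : Disjoint D S) :
    vdm (U ∪ S) * vdm (D ∪ S)
      = vdm U * vdm D * (vdm S * vdm S) * (cross (U ∪ D) S * cross (U ∩ D) S) := by
  rw [vdm_union U S hUS, vdm_union D S hDS]
  have : cross (U ∪ D) S * cross (U ∩ D) S = cross U S * cross D S := by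
    unfold cross
    exact Finset.prod_union_inter
  rw [this]; ring

/-- **Shuffling theorem** for lozenge tilings of doubly-dented hexagons, expressed through
Vandermonde products. -/
theorem shuffling_theorem (N y : ℕ) (U D U' D' : Finset ℕ)
    (hU : U ⊆ Finset.Icc 1 N) (hD : D ⊆ Finset.Icc 1 N)
    (hU' : U' ⊆ Finset.Icc 1 N) (hD' : D' ⊆ Finset.Icc 1 N)
    (hcardU : U.card = U'.card) (hcardD : D.card = D'.card)
    (hcup : U ∪ D = U' ∪ D') (hcap : U ∩ D = U' ∩ D')
    (hy : y ≤ N - (U ∪ D).card) :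
    (∑ S ∈ (Finset.Icc 1 N \ (U ∪ D)).powersetCard y, vdm (U ∪ S) * vdm (D ∪ S)) *
        (vdm U' * vdm D')
      = (∑ S ∈ (Finset.Icc 1 N \ (U ∪ D)).powersetCard y, vdm (U' ∪ S) * vdm (D' ∪ S)) *
        (vdm U * vdm D) := by
  rw [Finset.sum_mul, Finset.sum_mul]
  refine Finset.sum_congr rfl fun S hS => ?_
  have hSsub : S ⊆ Finset.Icc 1 N \ (U ∪ D) := (Finset.mem_powersetCard.mp hS).1
  have hdisj : Disjoint (U ∪ D) S :=
    (Finset.sdiff_disjoint.mono_left hSsub).symm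
  have hUS : Disjoint U S := hdisj.mono_left Finset.subset_union_left
  have hDS : Disjoint D S := hdisj.mono_left Finset.subset_union_right
  have hU'S : Disjoint U' S := by
    refine hdisj.mono_left ?_
    rw [hcup]; exact Finset.subset_union_left
  have hD'S : Disjoint D' S := by
    refine hdisj.mono_left ?_
    rw [hcup]; exact Finset.subset_union_right
  rw [pair_eq U D S hUS hDS, pair_eq U' D' S hU'S hD'S, hcup, hcap]
  ring
end

section
/- Let x, y, n be natural numbers, N = x + y + n, and let U, D, U', D' be subsets of [N] with U ∪ D = U' ∪ D', |U ∪ D| = n, and U ∩ D = U' ∩ D', with sizes u = |U|, u' = |U'|, d = |D|, d' = |D'| (which may differ). Let B ⊆ [N]∖(U∪D) be a set of barrier positions with |B| ≤ x. Then (∑_{S ⊆ [N]∖(U∪D∪B), |S| = y} W(U∪S)·W(D∪S)) · W(U')·W(D')·PP(u',d',y) = (∑_{S ⊆ [N]∖(U∪D∪B), |S| = y} W(U'∪S)·W(D'∪S)) · W(U)·W(D)·PP(u,d,y), where the sums range over all y-element subsets S of [N]∖(U∪D∪B). -/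
open Finset
open scoped symmDiff

/-- `W(T) = Δ(T)/Δ([|T|]) = ∏_{i<j} (t_j - t_i)/(j - i)`. -/
def W (T : Finset ℕ) : ℚ := (vdm T : ℚ) / (vdm (Finset.Icc 1 T.card) : ℚ)

/-- MacMahon's box product `PP(a,b,c) = ∏∏∏ (i+j+k-1)/(i+j+k-2)`. -/
def PP (a b c : ℕ) : ℚ :=
  ∏ i ∈ Finset.Icc 1 a, ∏ j ∈ Finset.Icc 1 b, ∏ k ∈ Finset.Icc 1 c,
    (((i : ℚ) + j + k - 1) / ((i : ℚ) + j + k - 2))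

/-! ### Auxiliary machinery -/

def fprod (t : ℕ) (T : Finset ℕ) : ℤ :=
  ∏ s ∈ T, (if s < t then (t:ℤ) - s else (s:ℤ) - t)

lemma fprod_def (t : ℕ) (T : Finset ℕ) :
    fprod t T = ∏ s ∈ T, (if s < t then (t:ℤ) - s else (s:ℤ) - t) := rfl

lemma vdm_eq_s2 (T : Finset ℕ) :
    vdm T = ∏ a ∈ T, ∏ b ∈ T, (if a < b then (b:ℤ) - a else 1) := by
  rw [vdm, Finset.prod_filter, Finset.prod_product]

lemma vdm_insert {t : ℕ} {T : Finset ℕ} (ht : t ∉ T) :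
    vdm (insert t T) = vdm T * fprod t T := by
  rw [vdm_eq_s2, vdm_eq_s2, fprod, Finset.prod_insert ht]
  have h1 : ∀ a ∈ T, (∏ b ∈ insert t T, (if a < b then (b:ℤ) - a else 1))
      = (if a < t then (t:ℤ) - a else 1) * ∏ b ∈ T, (if a < b then (b:ℤ) - a else 1) := by
    intro a _; rw [Finset.prod_insert ht]
  rw [Finset.prod_congr rfl h1, Finset.prod_mul_distrib, Finset.prod_insert ht]
  simp only [lt_irrefl, if_false, one_mul]
  have h2 : (∏ b ∈ T, (if t < b then (b:ℤ) - t else 1)) * ∏ a ∈ T, (if a < t then (t:ℤ) - a else 1)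
      = ∏ s ∈ T, (if s < t then (t:ℤ) - s else (s:ℤ) - t) := by
    rw [← Finset.prod_mul_distrib]
    refine Finset.prod_congr rfl fun s hs => ?_
    have hst : s ≠ t := fun h => ht (h ▸ hs)
    rcases lt_trichotomy s t with h | h | h
    · simp [h, not_lt.mpr h.le, h.ne']
    · exact absurd h hst
    · simp [h, not_lt.mpr h.le, h.ne']
  rw [← h2]; ring

lemma vdm_pos (T : Finset ℕ) : 0 < vdm T := by
  apply Finset.prod_pos
  intro p hp
  simp only [Finset.mem_filter] at hp
  have := hp.2
  omega

lemma fprod_ne_zero {t : ℕ} {T : Finset ℕ} (ht : t ∉ T) : fprod t T ≠ 0 := by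
  apply Finset.prod_ne_zero_iff.mpr
  intro s hs
  have hst : s ≠ t := fun h => ht (h ▸ hs)
  split <;> omega

lemma fprod_union {t : ℕ} {A B : Finset ℕ} (h : Disjoint A B) :
    fprod t (A ∪ B) = fprod t A * fprod t B := by
  rw [fprod_def, fprod_def, fprod_def, Finset.prod_union h]

lemma Icc_succ (k : ℕ) : Icc 1 (k+1) = insert (k+1) (Icc 1 k) := by
  ext a; simp [Finset.mem_Icc]; omega

lemma den_succ (k : ℕ) : vdm (Icc 1 (k+1)) = vdm (Icc 1 k) * (Nat.factorial k : ℤ) := by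
  have hk : (k+1) ∉ Icc 1 k := by simp
  rw [Icc_succ, vdm_insert hk]
  congr 1
  rw [fprod_def]
  have : ∀ s ∈ Icc 1 k, (if s < k+1 then ((k+1:ℕ):ℤ) - s else (s:ℤ) - (k+1:ℕ)) = ((k+1-s : ℕ) : ℤ) := by
    intro s hs; simp only [Finset.mem_Icc] at hs
    rw [if_pos (by omega)]; push_cast; omega
  rw [Finset.prod_congr rfl this, ← Nat.cast_prod]
  congr 1
  rw [← Finset.prod_Ico_id_eq_factorial, show Ico 1 (k+1) = Icc 1 k from by
    ext a; simp [Finset.mem_Icc, Finset.mem_Ico]]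
  apply Finset.prod_nbij' (fun s => k+1-s) (fun s => k+1-s)
  · intro a ha; simp only [Finset.mem_Icc] at *; omega
  · intro a ha; simp only [Finset.mem_Icc] at *; omega
  · intro a ha; simp only [Finset.mem_Icc] at ha; omega
  · intro a ha; simp only [Finset.mem_Icc] at ha; omega
  · intro a ha; rfl

lemma tele (c y : ℕ) : ∏ k ∈ Icc 1 y, (((c:ℚ)+k+1) / ((c:ℚ)+k)) = ((c:ℚ)+y+1)/((c:ℚ)+1) := by
  induction y with
  | zero => norm_num [div_self (show (c:ℚ)+1 ≠ 0 by positivity)]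
  | succ y ih =>
    rw [Icc_succ, Finset.prod_insert (by simp only [Finset.mem_Icc]; omega), ih]
    have h1 : (c:ℚ)+(y+1) ≠ 0 := by positivity
    have h2 : (c:ℚ)+1 ≠ 0 := by positivity
    push_cast at *
    field_simp
    ring

lemma PP_pos (a b c : ℕ) : 0 < PP a b c := by
  apply Finset.prod_pos; intro i hi
  apply Finset.prod_pos; intro j hj
  apply Finset.prod_pos; intro k hk
  simp only [Finset.mem_Icc] at *
  have h1 : (0:ℚ) < (i:ℚ)+j+k-1 := by
    have : (1:ℚ) ≤ i := by exact_mod_cast hi.1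
    have : (1:ℚ) ≤ j := by exact_mod_cast hj.1
    have : (1:ℚ) ≤ k := by exact_mod_cast hk.1
    linarith
  have h2 : (0:ℚ) < (i:ℚ)+j+k-2 := by
    have : (1:ℚ) ≤ i := by exact_mod_cast hi.1
    have : (1:ℚ) ≤ j := by exact_mod_cast hj.1
    have : (1:ℚ) ≤ k := by exact_mod_cast hk.1
    linarith
  positivity

lemma PP_succ_left (a b y : ℕ) :
    PP (a+1) b y = PP a b y * ∏ j ∈ Icc 1 b, (((a:ℚ)+j+y)/((a:ℚ)+j)) := by
  rw [PP, Icc_succ, Finset.prod_insert (by simp only [Finset.mem_Icc]; omega), ← PP, mul_comm]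
  congr 1
  refine Finset.prod_congr rfl fun j hj => ?_
  simp only [Finset.mem_Icc] at hj
  have h : ∀ k ∈ Icc 1 y, (((a+1:ℕ):ℚ)+j+k-1)/(((a+1:ℕ):ℚ)+j+k-2)
      = (((a+j-1:ℕ):ℚ)+k+1)/(((a+j-1:ℕ):ℚ)+k) := by
    intro k hk
    have : ((a+j-1:ℕ):ℚ) = (a:ℚ)+j-1 := by
      have := hj.1; push_cast [Nat.cast_sub (by omega : 1 ≤ a+j)]; ring
    rw [this]; push_cast; ring_nf
  rw [Finset.prod_congr rfl h, tele]
  have : ((a+j-1:ℕ):ℚ) = (a:ℚ)+j-1 := by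
    have := hj.1; push_cast [Nat.cast_sub (by omega : 1 ≤ a+j)]; ring
  rw [this]; ring_nf

lemma PP_succ_mid (a b y : ℕ) :
    PP a (b+1) y = PP a b y * ∏ i ∈ Icc 1 a, (((b:ℚ)+i+y)/((b:ℚ)+i)) := by
  rw [PP, PP, ← Finset.prod_mul_distrib]
  refine Finset.prod_congr rfl fun i hi => ?_
  simp only [Finset.mem_Icc] at hi
  rw [Icc_succ, Finset.prod_insert (by simp only [Finset.mem_Icc]; omega), mul_comm]
  congr 1
  have h : ∀ k ∈ Icc 1 y, (((i:ℕ):ℚ)+((b+1:ℕ):ℚ)+k-1)/(((i:ℕ):ℚ)+((b+1:ℕ):ℚ)+k-2)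
      = (((b+i-1:ℕ):ℚ)+k+1)/(((b+i-1:ℕ):ℚ)+k) := by
    intro k hk
    have : ((b+i-1:ℕ):ℚ) = (b:ℚ)+i-1 := by
      have := hi.1; push_cast [Nat.cast_sub (by omega : 1 ≤ b+i)]; ring
    rw [this]; push_cast; ring_nf
  rw [Finset.prod_congr rfl h, tele]
  have : ((b+i-1:ℕ):ℚ) = (b:ℚ)+i-1 := by
    have := hi.1; push_cast [Nat.cast_sub (by omega : 1 ≤ b+i)]; ring
  rw [this]; ring_nf

lemma prodQ (a c : ℕ) :
    ∏ i ∈ Icc 1 a, ((i:ℚ)+c) = (Nat.factorial (a+c) : ℚ) / (Nat.factorial c : ℚ) := by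
  induction a with
  | zero => norm_num [div_self (show (Nat.factorial c : ℚ) ≠ 0 by
      exact_mod_cast Nat.factorial_ne_zero c)]
  | succ a ih =>
    rw [Icc_succ, Finset.prod_insert (by simp only [Finset.mem_Icc]; omega), ih]
    have h1 : (Nat.factorial c : ℚ) ≠ 0 := by exact_mod_cast Nat.factorial_ne_zero c
    rw [show a+1+c = (a+c)+1 from by omega, Nat.factorial_succ, mul_div_assoc',
      div_eq_div_iff h1 h1]
    push_cast
    ring

lemma prod_shift (a c : ℕ) :
    ∏ i ∈ Icc 1 a, ((c:ℚ)+i) = (Nat.factorial (a+c) : ℚ) / (Nat.factorial c : ℚ) := by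
  rw [← prodQ a c]
  exact Finset.prod_congr rfl fun i _ => by ring

lemma key0 (a b y : ℕ) :
    PP a (b+1) y * ((b+y).factorial : ℚ) * (a.factorial : ℚ)
      = PP (a+1) b y * ((a+y).factorial : ℚ) * (b.factorial : ℚ) := by
  rw [PP_succ_mid, PP_succ_left]
  have hA : ∏ i ∈ Icc 1 a, (((b:ℚ)+i+y)/((b:ℚ)+i))
      = ((Nat.factorial (a+b+y) : ℚ)/(Nat.factorial (b+y) : ℚ))
        / ((Nat.factorial (a+b) : ℚ)/(Nat.factorial b : ℚ)) := by
    rw [Finset.prod_div_distrib]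
    rw [show (∏ i ∈ Icc 1 a, ((b:ℚ)+i+y)) = ∏ i ∈ Icc 1 a, (((b+y:ℕ):ℚ)+i) from
      Finset.prod_congr rfl fun i _ => by push_cast; ring]
    rw [prod_shift a (b+y), prod_shift a b, show a+(b+y) = a+b+y from by omega]
  have hB : ∏ j ∈ Icc 1 b, (((a:ℚ)+j+y)/((a:ℚ)+j))
      = ((Nat.factorial (a+b+y) : ℚ)/(Nat.factorial (a+y) : ℚ))
        / ((Nat.factorial (a+b) : ℚ)/(Nat.factorial a : ℚ)) := by
    rw [Finset.prod_div_distrib]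
    rw [show (∏ j ∈ Icc 1 b, ((a:ℚ)+j+y)) = ∏ j ∈ Icc 1 b, (((a+y:ℕ):ℚ)+j) from
      Finset.prod_congr rfl fun j _ => by push_cast; ring]
    rw [prod_shift b (a+y), prod_shift b a, show b+(a+y) = a+b+y from by omega,
      show b+a = a+b from by omega]
  rw [hA, hB]
  have n1 : ((b+y).factorial : ℚ) ≠ 0 := by exact_mod_cast Nat.factorial_ne_zero _
  have n2 : ((a+y).factorial : ℚ) ≠ 0 := by exact_mod_cast Nat.factorial_ne_zero _
  have n3 : ((a+b).factorial : ℚ) ≠ 0 := by exact_mod_cast Nat.factorial_ne_zero _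
  have n4 : ((a:ℕ).factorial : ℚ) ≠ 0 := by exact_mod_cast Nat.factorial_ne_zero _
  have n5 : ((b:ℕ).factorial : ℚ) ≠ 0 := by exact_mod_cast Nat.factorial_ne_zero _
  field_simp

noncomputable def Phi (U D S : Finset ℕ) : ℚ :=
  W (U ∪ S) * W (D ∪ S) / (W U * W D * PP U.card D.card S.card)

lemma step (U₀ D S : Finset ℕ) (t : ℕ) (htU : t ∉ U₀) (htD : t ∉ D) (htS : t ∉ S)
    (hUS : Disjoint U₀ S) (hDS : Disjoint D S) :
    Phi (insert t U₀) D S = Phi U₀ (insert t D) S := by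
  have htUS : t ∉ U₀ ∪ S := by simp [htU, htS]
  have htDS : t ∉ D ∪ S := by simp [htD, htS]
  set u := U₀.card with hu
  set d := D.card with hd
  set s := S.card with hs
  have c1 : (insert t U₀).card = u + 1 := Finset.card_insert_of_notMem htU
  have c2 : (insert t D).card = d + 1 := Finset.card_insert_of_notMem htD
  have c3 : (U₀ ∪ S).card = u + s := Finset.card_union_of_disjoint hUS
  have c4 : (D ∪ S).card = d + s := Finset.card_union_of_disjoint hDS
  have c5 : (insert t U₀ ∪ S).card = u + s + 1 := by
    rw [Finset.insert_union, Finset.card_insert_of_notMem htUS, c3]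
  have c6 : (insert t D ∪ S).card = d + s + 1 := by
    rw [Finset.insert_union, Finset.card_insert_of_notMem htDS, c4]
  have v1 : vdm (insert t U₀ ∪ S) = vdm (U₀ ∪ S) * (fprod t U₀ * fprod t S) := by
    rw [Finset.insert_union, vdm_insert htUS, fprod_union hUS]
  have v2 : vdm (insert t D ∪ S) = vdm (D ∪ S) * (fprod t D * fprod t S) := by
    rw [Finset.insert_union, vdm_insert htDS, fprod_union hDS]
  have v3 : vdm (insert t U₀) = vdm U₀ * fprod t U₀ := vdm_insert htU
  have v4 : vdm (insert t D) = vdm D * fprod t D := vdm_insert htD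
  have q1 : (vdm (Icc 1 (u+s+1)) : ℚ) ≠ 0 := by exact_mod_cast (vdm_pos _).ne'
  have q2 : (vdm (Icc 1 (d+s)) : ℚ) ≠ 0 := by exact_mod_cast (vdm_pos _).ne'
  have q3 : (vdm (Icc 1 (u+1)) : ℚ) ≠ 0 := by exact_mod_cast (vdm_pos _).ne'
  have q4 : (vdm (Icc 1 d) : ℚ) ≠ 0 := by exact_mod_cast (vdm_pos _).ne'
  have q5 : (vdm (Icc 1 (u+s)) : ℚ) ≠ 0 := by exact_mod_cast (vdm_pos _).ne'
  have q6 : (vdm (Icc 1 (d+s+1)) : ℚ) ≠ 0 := by exact_mod_cast (vdm_pos _).ne'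
  have q7 : (vdm (Icc 1 u) : ℚ) ≠ 0 := by exact_mod_cast (vdm_pos _).ne'
  have q8 : (vdm (Icc 1 (d+1)) : ℚ) ≠ 0 := by exact_mod_cast (vdm_pos _).ne'
  have w1 : (vdm U₀ : ℚ) ≠ 0 := by exact_mod_cast (vdm_pos _).ne'
  have w2 : (vdm D : ℚ) ≠ 0 := by exact_mod_cast (vdm_pos _).ne'
  have w3 : (vdm (U₀ ∪ S) : ℚ) ≠ 0 := by exact_mod_cast (vdm_pos _).ne'
  have w4 : (vdm (D ∪ S) : ℚ) ≠ 0 := by exact_mod_cast (vdm_pos _).ne'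
  have g1 : (fprod t U₀ : ℚ) ≠ 0 := by exact_mod_cast fprod_ne_zero htU
  have g2 : (fprod t D : ℚ) ≠ 0 := by exact_mod_cast fprod_ne_zero htD
  have g3 : (fprod t S : ℚ) ≠ 0 := by exact_mod_cast fprod_ne_zero htS
  have p1 : PP (u+1) d s ≠ 0 := (PP_pos _ _ _).ne'
  have p2 : PP u (d+1) s ≠ 0 := (PP_pos _ _ _).ne'
  have key : PP u (d+1) s * ((vdm (Icc 1 (u+s)) : ℚ) * (vdm (Icc 1 (d+s+1)) : ℚ)
        * (vdm (Icc 1 (u+1)) : ℚ) * (vdm (Icc 1 d) : ℚ))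
      = PP (u+1) d s * ((vdm (Icc 1 (u+s+1)) : ℚ) * (vdm (Icc 1 (d+s)) : ℚ)
        * (vdm (Icc 1 u) : ℚ) * (vdm (Icc 1 (d+1)) : ℚ)) := by
    rw [den_succ (u+s), den_succ (d+s), den_succ u, den_succ d]
    push_cast
    linear_combination ((vdm (Icc 1 (u+s)) : ℚ) * (vdm (Icc 1 (d+s)) : ℚ)
      * (vdm (Icc 1 u) : ℚ) * (vdm (Icc 1 d) : ℚ)) * key0 u d s
  clear_value u d s
  simp only [Phi, W]
  rw [c1, c2, c3, c4, c5, c6, v1, v2, v3, v4]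
  rw [← hu, ← hd, ← hs]
  push_cast
  field_simp
  linear_combination key

lemma W_pos (T : Finset ℕ) : 0 < W T := by
  apply div_pos <;> exact_mod_cast vdm_pos _

lemma D_determined {U D D' : Finset ℕ} (hcup : U ∪ D = U ∪ D') (hcap : U ∩ D = U ∩ D') :
    D = D' := by
  ext a
  have h1 := Finset.ext_iff.mp hcup a
  have h2 := Finset.ext_iff.mp hcap a
  simp only [Finset.mem_union, Finset.mem_inter] at h1 h2
  tauto

lemma invariant (S : Finset ℕ) (m : ℕ) : ∀ (U D U' D' : Finset ℕ),
    (U ∆ U').card ≤ m → U ∪ D = U' ∪ D' → U ∩ D = U' ∩ D' → Disjoint (U ∪ D) S →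
    Phi U D S = Phi U' D' S := by
  induction m with
  | zero =>
    intro U D U' D' hm hcup hcap _
    have hUU : U = U' := by
      have : U ∆ U' = ∅ := Finset.card_eq_zero.mp (Nat.le_zero.mp hm)
      rwa [← Finset.bot_eq_empty, symmDiff_eq_bot] at this
    subst hUU
    rw [D_determined hcup hcap]
  | succ m IH =>
    intro U D U' D' hm hcup hcap hdisj
    by_cases hUU : U = U'
    · subst hUU; rw [D_determined hcup hcap]
    · have hne : (U ∆ U').Nonempty := by
        rw [Finset.nonempty_iff_ne_empty]
        intro h
        exact hUU (by rwa [← Finset.bot_eq_empty, symmDiff_eq_bot] at h)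
      obtain ⟨t, ht⟩ := hne
      have htmem := ht
      rw [Finset.mem_symmDiff] at ht
      have hUS : Disjoint U S := hdisj.mono_left Finset.subset_union_left
      have hDS : Disjoint D S := hdisj.mono_left Finset.subset_union_right
      rcases ht with ⟨htU, htU'⟩ | ⟨htU', htU⟩
      · -- t ∈ U, t ∉ U' : move t from U to D
        have htD : t ∉ D := by
          intro h
          have : t ∈ U ∩ D := Finset.mem_inter.mpr ⟨htU, h⟩
          rw [hcap] at this
          exact htU' (Finset.mem_inter.mp this).1
        have htS : t ∉ S := Finset.disjoint_left.mp hUS htU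
        set U₁ := U.erase t with hU₁
        have hins : U = insert t U₁ := (Finset.insert_erase htU).symm
        have htU₁ : t ∉ U₁ := Finset.notMem_erase t U
        have hU₁S : Disjoint U₁ S := hUS.mono_left (Finset.erase_subset t U)
        have hunion : U₁ ∪ insert t D = U ∪ D := by
          ext a
          simp only [hU₁, Finset.mem_union, Finset.mem_insert, Finset.mem_erase]
          by_cases h : a = t <;> simp [h, htU] <;> tauto
        have hinter : U₁ ∩ insert t D = U ∩ D := by
          ext a
          simp only [hU₁, Finset.mem_inter, Finset.mem_insert, Finset.mem_erase]
          by_cases h : a = t <;> simp [h, htD] <;> tauto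
        have hsd : U₁ ∆ U' = (U ∆ U').erase t := by
          ext a
          simp only [hU₁, Finset.mem_symmDiff, Finset.mem_erase]
          by_cases h : a = t <;> simp [h, htU, htU'] <;> tauto
        have hcard : (U₁ ∆ U').card ≤ m := by
          rw [hsd, Finset.card_erase_of_mem htmem]
          omega
        calc Phi U D S = Phi U₁ (insert t D) S := by
              rw [hins]; exact step U₁ D S t htU₁ htD htS hU₁S hDS
          _ = Phi U' D' S := by
              apply IH U₁ (insert t D) U' D' hcard (hunion.trans hcup)
                (hinter.trans hcap)
              rw [hunion]; exact hdisj
      · -- t ∈ U', t ∉ U : move t from D to U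
        have htD : t ∈ D := by
          have : t ∈ U ∪ D := by rw [hcup]; exact Finset.mem_union_left _ htU'
          rcases Finset.mem_union.mp this with h | h
          · exact absurd h htU
          · exact h
        have htS : t ∉ S := Finset.disjoint_left.mp hDS htD
        set D₁ := D.erase t with hD₁
        have hinsD : D = insert t D₁ := (Finset.insert_erase htD).symm
        have htD₁ : t ∉ D₁ := Finset.notMem_erase t D
        have hD₁S : Disjoint D₁ S := hDS.mono_left (Finset.erase_subset t D)
        have hunion : insert t U ∪ D₁ = U ∪ D := by
          ext a
          simp only [hD₁, Finset.mem_union, Finset.mem_insert, Finset.mem_erase]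
          by_cases h : a = t <;> simp [h, htD] <;> tauto
        have hinter : insert t U ∩ D₁ = U ∩ D := by
          ext a
          simp only [hD₁, Finset.mem_inter, Finset.mem_insert, Finset.mem_erase]
          by_cases h : a = t <;> simp [h, htU] <;> tauto
        have hsd : (insert t U) ∆ U' = (U ∆ U').erase t := by
          ext a
          simp only [Finset.mem_symmDiff, Finset.mem_erase, Finset.mem_insert]
          by_cases h : a = t <;> simp [h, htU, htU'] <;> tauto
        have hcard : ((insert t U) ∆ U').card ≤ m := by
          rw [hsd, Finset.card_erase_of_mem htmem]
          omega
        calc Phi U D S = Phi (insert t U) D₁ S := by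
              rw [hinsD]; exact (step U D₁ S t htU htD₁ htS hUS hD₁S).symm
          _ = Phi U' D' S := by
              apply IH (insert t U) D₁ U' D' hcard (hunion.trans hcup)
                (hinter.trans hcap)
              rw [hunion]; exact hdisj

/-- **Generalized Shuffling Theorem** (with flips and barriers): the ratio of the numbers of
barrier-compatible tilings of `H_{x,y}(U;D;B)` and `H_{x,y}(U';D';B)` equals
`W(U)W(D)PP(u,d,y)/(W(U')W(D')PP(u',d',y))`, independently of the barrier set `B`. -/
theorem generalized_shuffling (x y n N : ℕ) (hN : N = x + y + n)
    (U D U' D' B : Finset ℕ)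
    (hU : U ⊆ Finset.Icc 1 N) (hD : D ⊆ Finset.Icc 1 N)
    (hU' : U' ⊆ Finset.Icc 1 N) (hD' : D' ⊆ Finset.Icc 1 N)
    (hcup : U ∪ D = U' ∪ D') (hn : (U ∪ D).card = n) (hcap : U ∩ D = U' ∩ D')
    (hB : B ⊆ Finset.Icc 1 N \ (U ∪ D)) (hBx : B.card ≤ x) :
    (∑ S ∈ (Finset.Icc 1 N \ (U ∪ D ∪ B)).powersetCard y, W (U ∪ S) * W (D ∪ S)) *
        (W U' * W D' * PP U'.card D'.card y)
      = (∑ S ∈ (Finset.Icc 1 N \ (U ∪ D ∪ B)).powersetCard y, W (U' ∪ S) * W (D' ∪ S)) *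
        (W U * W D * PP U.card D.card y) := by
  rw [Finset.sum_mul, Finset.sum_mul]
  apply Finset.sum_congr rfl
  intro S hS
  rw [Finset.mem_powersetCard] at hS
  obtain ⟨hSsub, hScard⟩ := hS
  have hdisj : Disjoint (U ∪ D) S := by
    rw [Finset.disjoint_right]
    intro a haS haUD
    have h := hSsub haS
    rw [Finset.mem_sdiff] at h
    exact h.2 (Finset.mem_union_left B haUD)
  have hΦ := invariant S ((U ∆ U').card) U D U' D' le_rfl hcup hcap hdisj
  have h1 : W U * W D * PP U.card D.card S.card ≠ 0 :=
    (mul_pos (mul_pos (W_pos U) (W_pos D)) (PP_pos _ _ _)).ne'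
  have h2 : W U' * W D' * PP U'.card D'.card S.card ≠ 0 :=
    (mul_pos (mul_pos (W_pos U') (W_pos D')) (PP_pos _ _ _)).ne'
  rw [Phi, Phi, div_eq_div_iff h1 h2] at hΦ
  rw [hScard] at hΦ
  exact hΦ
end
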